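/- arXiv:2306.12690 — 4 statements merged into one kernel-verified Lean document; each statement's English description precedes it below -/
import Mathlib

section
/- (Clustering with denoised data: loss consistency.) Let X, X̂ ∈ ℝ^{n×d} with ‖X_i‖ ≤ 1 for all i ∈ [n] and max_i ‖X̂_i − X_i‖ ≤ ε ≤ 1. Let C = (C_1,…,C_K) be a partition of [n] with centers m_1,…,m_K ∈ ℝ^d satisfying ‖X_i − m_k‖ ≤ δ ≤ 1 for all i ∈ C_k. Define the k-means losses f(C′, m′) = (1/n)∑_{k∈[K]}∑_{i∈C′_k} ‖X_i − m′_k‖² and f̂(C′, m′) = (1/n)∑_{k∈[K]}∑_{i∈C′_k} ‖X̂_i − m′_k‖². Let (Ĉ, m̂) be a global minimizer of f̂ over all K-partitions of [n] and all centers in ℝ^d. Then f(Ĉ, m̂) ≤ f(C, m) + ε(4 + 2δ + 4ε). -/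
/-!
Point by point, `‖X_i - c‖² ≤ (1 + ε) ‖X̂_i - c‖² + ε + ε²` for every center `c`. Summed over
`(Ĉ, m̂)`, this bounds `f(Ĉ, m̂)` by `(1 + ε) f̂(Ĉ, m̂) + ε + ε²`, and minimality lets one replace
`f̂(Ĉ, m̂)` by `f̂(C, m)`. On `(C, m)` the triangle inequality gives `‖X̂_i - m_k‖ ≤ δ + ε`, so
`(1 + ε) ‖X̂_i - m_k‖² + ε + ε²` is at most `‖X_i - m_k‖²` plus `ε(4 + 2δ + 4ε)`.
-/

open Finset

theorem Finset.sum_sum_of_existsUnique_mem {ι κ M : Type*} [Fintype ι] [Fintype κ] [AddCommMonoid M]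
    {C : κ → Finset ι} (hC : ∀ i, ∃! k, i ∈ C k) (g : ι → M) :
    ∑ k, ∑ i ∈ C k, g i = ∑ i, g i := by
  classical
  choose c hc hcu using hC
  have hfiber : ∀ k, C k = univ.filter (c · = k) := fun k ↦ by
    ext i
    simp only [mem_filter, mem_univ, true_and]
    exact ⟨fun hi ↦ (hcu i k hi).symm, fun h ↦ h ▸ hc i⟩
  simp_rw [hfiber]
  exact sum_fiberwise univ c g

theorem Finset.sum_sum_const_of_existsUnique_mem {ι κ M : Type*} [Fintype ι] [Fintype κ]
    [AddCommMonoid M] {C : κ → Finset ι} (hC : ∀ i, ∃! k, i ∈ C k) (b : M) :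
    ∑ k, ∑ _i ∈ C k, b = Fintype.card ι • b := by
  simpa using sum_sum_of_existsUnique_mem hC fun _ ↦ b

variable {E : Type*} [SeminormedAddCommGroup E] {ε δ : ℝ}

section Pointwise

variable {x y c : E}

theorem sq_norm_sub_le_of_norm_sub_le (hε : 0 ≤ ε) (hxy : ‖y - x‖ ≤ ε) :
    ‖x - c‖ ^ 2 ≤ (1 + ε) * ‖y - c‖ ^ 2 + (ε + ε ^ 2) := by
  have htri : ‖x - c‖ ≤ ‖y - x‖ + ‖y - c‖ := by
    simpa [norm_sub_rev y x] using norm_sub_le_norm_sub_add_norm_sub x y c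
  -- `2ε‖y - c‖ ≤ ε(1 + ‖y - c‖²)` absorbs the cross term
  nlinarith [norm_nonneg (x - c), norm_nonneg (y - c), sq_nonneg (‖y - c‖ - 1)]

theorem one_add_mul_sq_norm_sub_le (hε0 : 0 ≤ ε) (hε1 : ε ≤ 1) (hδ1 : δ ≤ 1)
    (hxy : ‖y - x‖ ≤ ε) (hxc : ‖x - c‖ ≤ δ) :
    (1 + ε) * ‖y - c‖ ^ 2 + (ε + ε ^ 2) ≤ ‖x - c‖ ^ 2 + ε * (4 + 2 * δ + 4 * ε) := by
  have htri : ‖y - c‖ ≤ ‖y - x‖ + ‖x - c‖ := norm_sub_le_norm_sub_add_norm_sub y x c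
  have hx0 := norm_nonneg (x - c)
  have hy0 := norm_nonneg (y - c)
  have hsq : ‖y - c‖ ^ 2 ≤ ‖x - c‖ ^ 2 + 2 * ε * δ + ε ^ 2 := by nlinarith
  have hbd : ‖y - c‖ ^ 2 ≤ 3 + 2 * ε := by nlinarith
  nlinarith

end Pointwise

section KMeans

variable {ι κ : Type*} [Fintype ι] [Fintype κ]

def kmeansCost (Y : ι → E) (C : κ → Finset ι) (m : κ → E) : ℝ :=
  ∑ k, ∑ i ∈ C k, ‖Y i - m k‖ ^ 2

theorem kmeansCost_le_of_denoised_le {X Xh : ι → E} {C Ch : κ → Finset ι} {m mh : κ → E}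
    (hε0 : 0 ≤ ε) (hε1 : ε ≤ 1) (hδ1 : δ ≤ 1) (hXh : ∀ i, ‖Xh i - X i‖ ≤ ε)
    (hC : ∀ i, ∃! k, i ∈ C k) (hclose : ∀ k, ∀ i ∈ C k, ‖X i - m k‖ ≤ δ)
    (hCh : ∀ i, ∃! k, i ∈ Ch k) (hmin : kmeansCost Xh Ch mh ≤ kmeansCost Xh C m) :
    kmeansCost X Ch mh ≤ kmeansCost X C m + Fintype.card ι * (ε * (4 + 2 * δ + 4 * ε)) := by
  have hcost (Y : ι → E) (C : κ → Finset ι) (m : κ → E) (hC : ∀ i, ∃! k, i ∈ C k) (a b : ℝ) :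
      ∑ k, ∑ i ∈ C k, (a * ‖Y i - m k‖ ^ 2 + b) = a * kmeansCost Y C m + Fintype.card ι * b := by
    simp only [sum_add_distrib, ← mul_sum, sum_sum_const_of_existsUnique_mem hC, nsmul_eq_mul,
      kmeansCost]
  calc kmeansCost X Ch mh
      ≤ ∑ k, ∑ i ∈ Ch k, ((1 + ε) * ‖Xh i - mh k‖ ^ 2 + (ε + ε ^ 2)) :=
        sum_le_sum fun k _ ↦ sum_le_sum fun i _ ↦ sq_norm_sub_le_of_norm_sub_le hε0 (hXh i)
    _ = (1 + ε) * kmeansCost Xh Ch mh + Fintype.card ι * (ε + ε ^ 2) := hcost _ _ _ hCh _ _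
    _ ≤ (1 + ε) * kmeansCost Xh C m + Fintype.card ι * (ε + ε ^ 2) := by gcongr
    _ = ∑ k, ∑ i ∈ C k, ((1 + ε) * ‖Xh i - m k‖ ^ 2 + (ε + ε ^ 2)) := (hcost _ _ _ hC _ _).symm
    _ ≤ ∑ k, ∑ i ∈ C k, (1 * ‖X i - m k‖ ^ 2 + ε * (4 + 2 * δ + 4 * ε)) :=
        sum_le_sum fun k _ ↦ sum_le_sum fun i hi ↦ by
          simpa using one_add_mul_sq_norm_sub_le hε0 hε1 hδ1 (hXh i) (hclose k i hi)
    _ = kmeansCost X C m + Fintype.card ι * (ε * (4 + 2 * δ + 4 * ε)) := by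
        rw [hcost _ _ _ hC, one_mul]

end KMeans

theorem kmeans_denoised_loss_consistency_general (n d K : ℕ) (ε δ : ℝ)
    (hε0 : 0 ≤ ε) (hε1 : ε ≤ 1) (hδ0 : 0 ≤ δ) (hδ1 : δ ≤ 1)
    (X Xh : Fin n → EuclideanSpace ℝ (Fin d))
    (hXh : ∀ i, ‖Xh i - X i‖ ≤ ε)
    (C : Fin K → Finset (Fin n)) (m : Fin K → EuclideanSpace ℝ (Fin d))
    (hpart : ∀ i : Fin n, ∃! k, i ∈ C k)
    (hclose : ∀ k, ∀ i ∈ C k, ‖X i - m k‖ ≤ δ)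
    (Ch : Fin K → Finset (Fin n)) (mh : Fin K → EuclideanSpace ℝ (Fin d))
    (hChpart : ∀ i : Fin n, ∃! k, i ∈ Ch k)
    (hmin : ∀ (C' : Fin K → Finset (Fin n)) (m' : Fin K → EuclideanSpace ℝ (Fin d)),
      (∀ i : Fin n, ∃! k, i ∈ C' k) →
      (1 / n : ℝ) * ∑ k, ∑ i ∈ Ch k, ‖Xh i - mh k‖ ^ 2 ≤
        (1 / n : ℝ) * ∑ k, ∑ i ∈ C' k, ‖Xh i - m' k‖ ^ 2) :
    (1 / n : ℝ) * ∑ k, ∑ i ∈ Ch k, ‖X i - mh k‖ ^ 2 ≤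
      (1 / n : ℝ) * ∑ k, ∑ i ∈ C k, ‖X i - m k‖ ^ 2 + ε * (4 + 2 * δ + 4 * ε) := by
  rcases Nat.eq_zero_or_pos n with rfl | hn
  · simp only [CharP.cast_eq_zero, div_zero, zero_mul, zero_add]
    positivity
  have hn' : (0 : ℝ) < 1 / n := by positivity
  have hcost := kmeansCost_le_of_denoised_le hε0 hε1 hδ1 hXh hpart hclose hChpart
    (le_of_mul_le_mul_left (hmin C m hpart) hn')
  rw [Fintype.card_fin] at hcost
  calc (1 / n : ℝ) * kmeansCost X Ch mh
      ≤ 1 / n * (kmeansCost X C m + n * (ε * (4 + 2 * δ + 4 * ε))) := by gcongr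
    _ = 1 / n * kmeansCost X C m + ε * (4 + 2 * δ + 4 * ε) := by field_simp

/-- Proposition (clustering with denoised data: loss consistency).  If `‖X_i‖ ≤ 1`,
`max_i ‖X̂_i − X_i‖ ≤ ε ≤ 1`, `C` is a `K`-partition of `[n]` with centers `m` such that
`‖X_i − m_k‖ ≤ δ ≤ 1` for `i ∈ C_k`, and `(Ĉ, m̂)` globally minimizes the `k`-means loss
`f̂` built from the denoised data, then `f(Ĉ, m̂) ≤ f(C, m) + ε(4 + 2δ + 4ε)`. -/
theorem kmeans_denoised_loss_consistency (n d K : ℕ) (ε δ : ℝ)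
    (hε0 : 0 ≤ ε) (hε1 : ε ≤ 1) (hδ0 : 0 ≤ δ) (hδ1 : δ ≤ 1)
    (X Xh : Fin n → EuclideanSpace ℝ (Fin d))
    (hX : ∀ i, ‖X i‖ ≤ 1) (hXh : ∀ i, ‖Xh i - X i‖ ≤ ε)
    (C : Fin K → Finset (Fin n)) (m : Fin K → EuclideanSpace ℝ (Fin d))
    (hpart : ∀ i : Fin n, ∃! k, i ∈ C k)
    (hclose : ∀ k, ∀ i ∈ C k, ‖X i - m k‖ ≤ δ)
    (Ch : Fin K → Finset (Fin n)) (mh : Fin K → EuclideanSpace ℝ (Fin d))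
    (hChpart : ∀ i : Fin n, ∃! k, i ∈ Ch k)
    (hmin : ∀ (C' : Fin K → Finset (Fin n)) (m' : Fin K → EuclideanSpace ℝ (Fin d)),
      (∀ i : Fin n, ∃! k, i ∈ C' k) →
      (1 / n : ℝ) * ∑ k, ∑ i ∈ Ch k, ‖Xh i - mh k‖ ^ 2 ≤
        (1 / n : ℝ) * ∑ k, ∑ i ∈ C' k, ‖Xh i - m' k‖ ^ 2) :
    (1 / n : ℝ) * ∑ k, ∑ i ∈ Ch k, ‖X i - mh k‖ ^ 2 ≤
      (1 / n : ℝ) * ∑ k, ∑ i ∈ C k, ‖X i - m k‖ ^ 2 + ε * (4 + 2 * δ + 4 * ε) :=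
  kmeans_denoised_loss_consistency_general n d K ε δ hε0 hε1 hδ0 hδ1 X Xh hXh C m hpart hclose Ch mh
    hChpart hmin
end

section
/- (Graphical Laplacian stability.) Let k : ℝ^d × ℝ^d → ℝ be symmetric and L₀-Lipschitz in each argument, and satisfy 1/K ≤ k(x,y) ≤ K whenever ‖x‖, ‖y‖ ≤ 2, for constants K ≥ 1, L₀ > 0. Let X_1,…,X_n ∈ ℝ^d with ‖X_i‖ ≤ 1 and X̂_1,…,X̂_n ∈ ℝ^d with ‖X̂_i − X_i‖ ≤ ε ≤ 1 for all i. Define A_{ij} = k(X_i, X_j), the diagonal matrix D with D_{ii} = ∑_{j∈[n]} A_{ij}, and the normalized Laplacian L = I − D^{−1/2} A D^{−1/2}; define Â, D̂, L̂ analogously from X̂_1,…,X̂_n. Then there is a constant C depending only on K and L₀ (not on n, d) such that max_{i∈[n]} ∑_{j∈[n]} |L̂_{ij} − L_{ij}| ≤ C·ε, i.e. ‖L̂ − L‖_∞ ≤ Cε; moreover ‖L̂‖_∞ = max_i ∑_j |L̂_{ij}| ≤ 1 + K². -/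
/-!
Write `c` for the number of points. On the ball of radius 2 the kernel lies in `[1/K, K]`, so
every degree `D_i` lies in `[c/K, cK]` and every entry `A_ij / √(D_i D_j)` of the normalized
adjacency matrix is at most `K²/c`; this gives the bound `1 + K²`. Moving the points by at most
`ε` moves each kernel value by at most `δ = 2L₀ε` and each degree by at most `cδ`, hence each
`√D_i` by at most `cδ / (2√(c/K))`. Feeding these into `b/R - a/P = (b - a)/R + a(P - R)/(PR)`
shows that each entry of the normalized adjacency matrix moves by `O_K(δ/c)`, so each row of the
Laplacian moves by `O_K(δ)` in `ℓ¹`.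
-/

/-- The normalized graph Laplacian `L = I − D^{−1/2} A D^{−1/2}` built from data points
`X_1, …, X_n` and a kernel `k`, where `A_{ij} = k(X_i, X_j)` and `D_{ii} = ∑_j A_{ij}`. -/
noncomputable def lapMat {n d : ℕ} (k : EuclideanSpace ℝ (Fin d) → EuclideanSpace ℝ (Fin d) → ℝ)
    (X : Fin n → EuclideanSpace ℝ (Fin d)) : Matrix (Fin n) (Fin n) ℝ :=
  fun i j => (if i = j then (1 : ℝ) else 0) -
    k (X i) (X j) /
      (Real.sqrt (∑ l, k (X i) (X l)) * Real.sqrt (∑ l, k (X j) (X l)))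

open Finset

theorem Real.abs_sqrt_sub_sqrt_le {x y m : ℝ} (hm : 0 < m) (hx : m ≤ x) (hy : m ≤ y) :
    |√x - √y| ≤ |x - y| / (2 * √m) := by
  have hsum : 2 * √m ≤ √x + √y := by
    linarith [Real.sqrt_le_sqrt hx, Real.sqrt_le_sqrt hy]
  have hxy : |x - y| = |√x - √y| * (√x + √y) := by
    rw [← abs_of_nonneg (hsum.trans' (by positivity)), ← abs_mul]
    congr 1
    nlinarith [Real.mul_self_sqrt (hm.le.trans hx), Real.mul_self_sqrt (hm.le.trans hy)]
  rw [le_div_iff₀ (by positivity), hxy]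
  gcongr

theorem abs_mul_sub_mul_le (p q r s : ℝ) : |p * q - r * s| ≤ |p - r| * |q| + |r| * |q - s| := by
  calc |p * q - r * s| = |(p - r) * q + r * (q - s)| := by congr 1; ring
    _ ≤ |p - r| * |q| + |r| * |q - s| := by
      rw [← abs_mul, ← abs_mul]; exact abs_add_le _ _

theorem abs_div_sub_div_le {a b P R : ℝ} (hP : 0 < P) (hR : 0 < R) :
    |b / R - a / P| ≤ |b - a| / R + |a| * |P - R| / (P * R) := by
  calc |b / R - a / P| = |(b - a) / R + a * (P - R) / (P * R)| := by
        congr 1; field_simp; ring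
    _ ≤ |b - a| / R + |a| * |P - R| / (P * R) := by
      refine (abs_add_le _ _).trans_eq ?_
      rw [abs_div, abs_div, abs_mul, abs_of_pos hR, abs_of_pos (mul_pos hP hR)]

theorem abs_apply₂_sub_le {E : Type*} [SeminormedAddCommGroup E] {k : E → E → ℝ} {L : ℝ}
    (h₁ : ∀ x x' y, |k x y - k x' y| ≤ L * ‖x - x'‖)
    (h₂ : ∀ x y y', |k x y - k x y'| ≤ L * ‖y - y'‖) (x x' y y' : E) :
    |k x y - k x' y'| ≤ L * (‖x - x'‖ + ‖y - y'‖) := by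
  calc |k x y - k x' y'| ≤ |k x y - k x' y| + |k x' y - k x' y'| := abs_sub_le _ _ _
    _ ≤ L * (‖x - x'‖ + ‖y - y'‖) := by linarith [h₁ x x' y, h₂ x' y y']

/-- The matrix `D^{-1/2} A D^{-1/2}`, with `D` the diagonal matrix of row sums of `A`. -/
noncomputable def normalizedAdjacency {ι : Type*} [Fintype ι] (A : Matrix ι ι ℝ) :
    Matrix ι ι ℝ :=
  fun i j => A i j / (√(∑ l, A i l) * √(∑ l, A j l))

theorem lapMat_eq {n d : ℕ}
    (k : EuclideanSpace ℝ (Fin d) → EuclideanSpace ℝ (Fin d) → ℝ)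
    (X : Fin n → EuclideanSpace ℝ (Fin d)) :
    lapMat k X = 1 - normalizedAdjacency (Matrix.of fun i j => k (X i) (X j)) := by
  ext i j
  simp [lapMat, normalizedAdjacency, Matrix.one_apply]

section

variable {ι : Type*} [Fintype ι] {A B : Matrix ι ι ℝ} {K δ : ℝ}

theorem card_div_le_sum_row (hA : ∀ i j, A i j ∈ Set.Icc K⁻¹ K) (i : ι) :
    Fintype.card ι / K ≤ ∑ l, A i l := by
  simpa [div_eq_mul_inv] using card_nsmul_le_sum univ (A i) K⁻¹ fun l _ ↦ (hA i l).1

theorem sum_row_le_card_mul (hA : ∀ i j, A i j ∈ Set.Icc K⁻¹ K) (i : ι) :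
    ∑ l, A i l ≤ Fintype.card ι * K := by
  simpa using sum_le_card_nsmul univ (A i) K fun l _ ↦ (hA i l).2

theorem abs_sum_row_sub_sum_row_le (hAB : ∀ i j, |B i j - A i j| ≤ δ) (i : ι) :
    |∑ l, B i l - ∑ l, A i l| ≤ Fintype.card ι * δ := by
  rw [← sum_sub_distrib]
  refine (abs_sum_le_sum_abs _ _).trans ?_
  simpa using sum_le_card_nsmul univ _ δ fun l _ ↦ hAB i l

theorem sqrt_sum_row_mem_Icc (hK : 0 < K) (hA : ∀ i j, A i j ∈ Set.Icc K⁻¹ K) (i : ι) :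
    √(∑ l, A i l) ∈ Set.Icc √(Fintype.card ι / K) (K * √(Fintype.card ι / K)) := by
  refine ⟨Real.sqrt_le_sqrt (card_div_le_sum_row hA i), ?_⟩
  rw [Real.sqrt_le_left (by positivity), mul_pow, Real.sq_sqrt (by positivity)]
  refine (sum_row_le_card_mul hA i).trans_eq ?_
  field_simp

theorem card_div_le_sqrt_sum_row_mul (hK : 0 < K) (hA : ∀ i j, A i j ∈ Set.Icc K⁻¹ K)
    (i j : ι) : Fintype.card ι / K ≤ √(∑ l, A i l) * √(∑ l, A j l) := by
  rw [← Real.mul_self_sqrt (by positivity : (0 : ℝ) ≤ Fintype.card ι / K)]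
  exact mul_le_mul (sqrt_sum_row_mem_Icc hK hA i).1 (sqrt_sum_row_mem_Icc hK hA j).1
    (by positivity) (by positivity)

theorem abs_sqrt_sum_row_mul_sub_le (hK : 0 < K) (hA : ∀ i j, A i j ∈ Set.Icc K⁻¹ K)
    (hB : ∀ i j, B i j ∈ Set.Icc K⁻¹ K) (hAB : ∀ i j, |B i j - A i j| ≤ δ) (i j : ι) :
    |√(∑ l, A i l) * √(∑ l, A j l) - √(∑ l, B i l) * √(∑ l, B j l)| ≤
      Fintype.card ι * K * δ := by
  have : Nonempty ι := ⟨i⟩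
  have hc : (0 : ℝ) < Fintype.card ι := by exact_mod_cast Fintype.card_pos
  set m := √(Fintype.card ι / K)
  have hm : 0 < m := Real.sqrt_pos.2 (by positivity)
  have hδ : 0 ≤ δ := (abs_nonneg _).trans (hAB i i)
  have hsqrt : ∀ i, |√(∑ l, A i l) - √(∑ l, B i l)| ≤
      Fintype.card ι * δ / (2 * m) := by
    intro i
    refine (Real.abs_sqrt_sub_sqrt_le (by positivity) (card_div_le_sum_row hA i)
      (card_div_le_sum_row hB i)).trans ?_
    rw [abs_sub_comm]
    gcongr
    exact abs_sum_row_sub_sum_row_le hAB i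
  have hA_le : ∀ i, |√(∑ l, A i l)| ≤ K * m := fun i ↦
    (abs_of_nonneg (Real.sqrt_nonneg _)).trans_le (sqrt_sum_row_mem_Icc hK hA i).2
  have hB_le : ∀ i, |√(∑ l, B i l)| ≤ K * m := fun i ↦
    (abs_of_nonneg (Real.sqrt_nonneg _)).trans_le (sqrt_sum_row_mem_Icc hK hB i).2
  calc _ ≤ _ := abs_mul_sub_mul_le _ _ _ _
    _ ≤ Fintype.card ι * δ / (2 * m) * (K * m) + K * m * (Fintype.card ι * δ / (2 * m)) := by
      gcongr
      exacts [hsqrt i, hA_le j, hB_le i, hsqrt j]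
    _ = Fintype.card ι * K * δ := by field_simp; ring

namespace normalizedAdjacency

theorem mem_Icc (hK : 0 < K) (hA : ∀ i j, A i j ∈ Set.Icc K⁻¹ K) (i j : ι) :
    normalizedAdjacency A i j ∈ Set.Icc 0 (K ^ 2 / Fintype.card ι) := by
  have : Nonempty ι := ⟨i⟩
  have hc : (0 : ℝ) < Fintype.card ι := by exact_mod_cast Fintype.card_pos
  refine ⟨div_nonneg ((inv_pos.2 hK).le.trans (hA i j).1) (by positivity), ?_⟩
  calc normalizedAdjacency A i j ≤ K / (Fintype.card ι / K) :=
        div_le_div₀ hK.le (hA i j).2 (by positivity) (card_div_le_sqrt_sum_row_mul hK hA i j)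
    _ = K ^ 2 / Fintype.card ι := by field_simp

theorem sum_abs_one_sub_le [DecidableEq ι] (hK : 0 < K) (hA : ∀ i j, A i j ∈ Set.Icc K⁻¹ K)
    (i : ι) : ∑ j, |(1 - normalizedAdjacency A) i j| ≤ 1 + K ^ 2 := by
  have : Nonempty ι := ⟨i⟩
  calc ∑ j, |(1 - normalizedAdjacency A) i j|
      ≤ ∑ j, ((1 : Matrix ι ι ℝ) i j + K ^ 2 / Fintype.card ι) := by
        gcongr with j
        have hN := mem_Icc hK hA i j
        have h1 : 0 ≤ (1 : Matrix ι ι ℝ) i j := by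
          rw [Matrix.one_apply]; split_ifs <;> norm_num
        rw [Matrix.sub_apply]
        refine (abs_sub _ _).trans ?_
        rw [abs_of_nonneg h1, abs_of_nonneg hN.1]
        gcongr
        exact hN.2
    _ = 1 + K ^ 2 := by
        simp only [Matrix.one_apply, sum_add_distrib, sum_ite_eq, mem_univ, ↓reduceIte,
          sum_const, card_univ, nsmul_eq_mul, add_right_inj]
        field_simp

theorem abs_sub_le (hK : 1 ≤ K) (hA : ∀ i j, A i j ∈ Set.Icc K⁻¹ K)
    (hB : ∀ i j, B i j ∈ Set.Icc K⁻¹ K) (hAB : ∀ i j, |B i j - A i j| ≤ δ) (i j : ι) :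
    |normalizedAdjacency B i j - normalizedAdjacency A i j| ≤
      2 * K ^ 4 * δ / Fintype.card ι := by
  have : Nonempty ι := ⟨i⟩
  have hc : (0 : ℝ) < Fintype.card ι := by exact_mod_cast Fintype.card_pos
  have hK0 : 0 < K := one_pos.trans_le hK
  have hδ : 0 ≤ δ := (abs_nonneg _).trans (hAB i i)
  have hP := card_div_le_sqrt_sum_row_mul hK0 hA i j
  have hR := card_div_le_sqrt_sum_row_mul hK0 hB i j
  have hA_le : |A i j| ≤ K := abs_le.2 ⟨by linarith [(hA i j).1, inv_pos.2 hK0], (hA i j).2⟩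
  calc _ ≤ _ := abs_div_sub_div_le (hP.trans_lt' (by positivity)) (hR.trans_lt' (by positivity))
    _ ≤ δ / (Fintype.card ι / K) +
        K * (Fintype.card ι * K * δ) / (Fintype.card ι / K * (Fintype.card ι / K)) := by
      gcongr
      exacts [hAB i j, abs_sqrt_sum_row_mul_sub_le hK0 hA hB hAB i j]
    _ = (K + K ^ 4) * δ / Fintype.card ι := by field_simp
    _ ≤ 2 * K ^ 4 * δ / Fintype.card ι := by
      gcongr
      nlinarith [pow_le_pow_left₀ zero_le_one hK 3]

theorem sum_abs_sub_le (hK : 1 ≤ K) (hA : ∀ i j, A i j ∈ Set.Icc K⁻¹ K)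
    (hB : ∀ i j, B i j ∈ Set.Icc K⁻¹ K) (hAB : ∀ i j, |B i j - A i j| ≤ δ) (i : ι) :
    ∑ j, |normalizedAdjacency B i j - normalizedAdjacency A i j| ≤ 2 * K ^ 4 * δ := by
  have : Nonempty ι := ⟨i⟩
  refine (sum_le_card_nsmul univ _ _ fun j _ ↦ abs_sub_le hK hA hB hAB i j).trans_eq ?_
  simp only [card_univ, nsmul_eq_mul]
  field_simp

end normalizedAdjacency

end

/-- Proposition (graphical Laplacian stability).  For a symmetric kernel `k`,
`L₀`-Lipschitz in each argument with `1/K ≤ k ≤ K` on the ball of radius 2, data with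
`‖X_i‖ ≤ 1` and denoised data with `‖X̂_i − X_i‖ ≤ ε ≤ 1`, there is a constant `C`
depending only on `K, L₀` so that `‖L̂ − L‖_∞ ≤ Cε`; moreover `‖L̂‖_∞ ≤ 1 + K²`. -/
theorem laplacian_stability (K L₀ : ℝ) (hK : 1 ≤ K) (hL₀ : 0 < L₀) :
    ∃ C : ℝ, 0 < C ∧
      ∀ (n d : ℕ) (k : EuclideanSpace ℝ (Fin d) → EuclideanSpace ℝ (Fin d) → ℝ)
        (X Xh : Fin n → EuclideanSpace ℝ (Fin d)) (ε : ℝ),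
        (∀ x y, k x y = k y x) →
        (∀ x x' y, |k x y - k x' y| ≤ L₀ * ‖x - x'‖) →
        (∀ x y y', |k x y - k x y'| ≤ L₀ * ‖y - y'‖) →
        (∀ x y, ‖x‖ ≤ 2 → ‖y‖ ≤ 2 → 1 / K ≤ k x y ∧ k x y ≤ K) →
        (∀ i, ‖X i‖ ≤ 1) →
        0 ≤ ε → ε ≤ 1 →
        (∀ i, ‖Xh i - X i‖ ≤ ε) →
        (∀ i : Fin n, ∑ j : Fin n, |lapMat k Xh i j - lapMat k X i j| ≤ C * ε) ∧
        (∀ i : Fin n, ∑ j : Fin n, |lapMat k Xh i j| ≤ 1 + K ^ 2) := by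
  refine ⟨4 * K ^ 4 * L₀, by positivity, ?_⟩
  intro n d k X Xh ε _ hlip₁ hlip₂ hbound hX hε₀ hε₁ hXh
  have hmem : ∀ Y : Fin n → EuclideanSpace ℝ (Fin d), (∀ i, ‖Y i‖ ≤ 2) →
      ∀ i j, Matrix.of (fun i j ↦ k (Y i) (Y j)) i j ∈ Set.Icc K⁻¹ K :=
    fun Y hY i j ↦ by simpa [one_div] using hbound _ _ (hY i) (hY j)
  have hA := hmem X fun i ↦ (hX i).trans one_le_two
  have hB := hmem Xh fun i ↦ by linarith [norm_le_norm_add_norm_sub' (Xh i) (X i), hXh i, hX i]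
  have hAB : ∀ i j, |k (Xh i) (Xh j) - k (X i) (X j)| ≤ 2 * L₀ * ε := fun i j ↦ by
    have := abs_apply₂_sub_le hlip₁ hlip₂ (Xh i) (X i) (Xh j) (X j)
    nlinarith [hXh i, hXh j]
  rw [lapMat_eq, lapMat_eq]
  refine ⟨fun i ↦ ?_, fun i ↦ normalizedAdjacency.sum_abs_one_sub_le (by positivity) hB i⟩
  simp only [Matrix.sub_apply, sub_sub_sub_cancel_left]
  calc _ = _ := sum_congr rfl fun j _ ↦ abs_sub_comm _ _
    _ ≤ 2 * K ^ 4 * (2 * L₀ * ε) := normalizedAdjacency.sum_abs_sub_le hK hA hB hAB i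
    _ = 4 * K ^ 4 * L₀ * ε := by ring
end

section
/- (ERM with denoised data: parameter consistency.) Let F : ℝ^d × Y × ℝ^p → ℝ satisfy: there are constants L, Δ > 0 such that |F(z, y, θ) − F(x, y, θ)| ≤ L‖z − x‖ for all y ∈ Y, θ ∈ ℝ^p, and all x, z with ‖z − x‖ ≤ Δ. Let (X_i, y_i), X̂_i with max_i ‖X̂_i − X_i‖ ≤ ε ≤ Δ, and set f(θ) = (1/n)∑_i F(X_i, y_i, θ), f̂(θ) = (1/n)∑_i F(X̂_i, y_i, θ). Suppose f is twice continuously differentiable with a unique global minimizer θ*, and there are constants γ, δ, λ_f > 0 with: f(θ) − f(θ*) ≥ γ whenever ‖θ − θ*‖ ≥ δ, and ∇²f(θ) ⪰ λ_f·I whenever ‖θ − θ*‖ ≤ δ. If 2Lε < γ and θ̂* is a global minimizer of f̂, then ‖θ̂* − θ*‖² ≤ 4Lε/λ_f. -/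
/-!
Denoising moves every sample by at most `ε`, so by the Lipschitz bound the two empirical risks
are uniformly `Lε`-close, and the denoised minimizer `θ̂*` is a `2Lε`-minimizer of `f`. Since
`2Lε < γ`, the growth condition forces `θ̂*` into the ball of radius `δ` around `θ*`, where the
Hessian bound gives the quadratic growth `f θ - f θ* ≥ (λ_f / 2) ‖θ - θ*‖²`.
-/

open Set

theorem abs_average_sub_average_le {ι : Type*} [Fintype ι] {a b : ι → ℝ} {c : ℝ}
    (hc : 0 ≤ c) (h : ∀ i, |a i - b i| ≤ c) :
    |(1 / Fintype.card ι : ℝ) * ∑ i, a i - (1 / Fintype.card ι : ℝ) * ∑ i, b i| ≤ c := by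
  rw [← mul_sub, ← Finset.sum_sub_distrib, abs_mul, abs_of_nonneg (by positivity)]
  have hsum : |∑ i, (a i - b i)| ≤ Fintype.card ι * c := by
    refine ((Finset.abs_sum_le_sum_abs _ _).trans (Finset.sum_le_sum fun i _ => h i)).trans_eq ?_
    simp
  rcases (Nat.cast_nonneg (α := ℝ) (Fintype.card ι)).eq_or_lt with hcard | hcard
  · simpa [← hcard] using hc
  · rw [one_div, inv_mul_le_iff₀ hcard]
    exact hsum

theorem sub_le_two_mul_of_abs_sub_le_of_forall_le {α : Type*} {f g : α → ℝ} {η : ℝ}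
    (hclose : ∀ x, |g x - f x| ≤ η) {xh : α} (hxh : ∀ x, g xh ≤ g x) (x : α) :
    f xh - f x ≤ 2 * η := by
  have h₁ := abs_le.mp (hclose xh)
  have h₂ := abs_le.mp (hclose x)
  linarith [hxh x]

theorem half_mul_le_sub_of_le_deriv₂ {g g' g'' : ℝ → ℝ} {K : ℝ}
    (hg : ∀ t, HasDerivAt g (g' t) t) (hg' : ∀ t, HasDerivAt g' (g'' t) t)
    (h₀ : g' 0 = 0) (hK : ∀ t ∈ Icc (0 : ℝ) 1, K ≤ g'' t) :
    K / 2 ≤ g 1 - g 0 := by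
  have hslope : MonotoneOn (fun t => g' t - K * t) (Icc 0 1) := by
    have hd : ∀ t, HasDerivAt (fun t => g' t - K * t) (g'' t - K) t := fun t =>
      ((hg' t).sub ((hasDerivAt_id' t).const_mul K)).congr_deriv (by ring)
    refine monotoneOn_of_hasDerivWithinAt_nonneg (convex_Icc 0 1)
      (fun t _ => (hd t).continuousAt.continuousWithinAt) (fun t _ => (hd t).hasDerivWithinAt)
      fun t ht => ?_
    rw [interior_Icc] at ht
    linarith [hK t (Ioo_subset_Icc_self ht)]
  have hgap : MonotoneOn (fun t => g t - K * t ^ 2 / 2) (Icc 0 1) := by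
    have hd : ∀ t, HasDerivAt (fun t => g t - K * t ^ 2 / 2) (g' t - K * t) t := fun t =>
      ((hg t).sub (((hasDerivAt_pow 2 t).const_mul K).div_const 2)).congr_deriv (by ring)
    refine monotoneOn_of_hasDerivWithinAt_nonneg (convex_Icc 0 1)
      (fun t _ => (hd t).continuousAt.continuousWithinAt) (fun t _ => (hd t).hasDerivWithinAt)
      fun t ht => ?_
    rw [interior_Icc] at ht
    have := hslope (left_mem_Icc.mpr zero_le_one) (Ioo_subset_Icc_self ht) ht.1.le
    simp only [mul_zero, sub_zero, h₀] at this
    exact this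
  have := hgap (left_mem_Icc.mpr zero_le_one) (right_mem_Icc.mpr zero_le_one) zero_le_one
  norm_num at this
  linarith

theorem half_mul_norm_sq_le_sub_of_hessian_ge {E : Type*} [NormedAddCommGroup E]
    [NormedSpace ℝ E] {f : E → ℝ} (hf : ContDiff ℝ 2 f) {x₀ x : E}
    (hcrit : fderiv ℝ f x₀ = 0) {lam : ℝ} (hhess : ∀ z ∈ segment ℝ x₀ x, ∀ w : E,
      lam * ‖w‖ ^ 2 ≤ iteratedFDeriv ℝ 2 f z ![w, w]) :
    lam / 2 * ‖x - x₀‖ ^ 2 ≤ f x - f x₀ := by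
  set c := AffineMap.lineMap (k := ℝ) x₀ x
  set v := x - x₀
  have hdf : Differentiable ℝ f := hf.differentiable (by norm_num)
  have hdf' : Differentiable ℝ (fderiv ℝ f) :=
    (hf.fderiv_right (m := 1) (by norm_num)).differentiable (by norm_num)
  have hc : ∀ t, HasDerivAt c v t := fun t => AffineMap.hasDerivAt_lineMap
  have hg : ∀ t, HasDerivAt (fun t => f (c t)) (fderiv ℝ f (c t) v) t := fun t =>
    (hdf (c t)).hasFDerivAt.comp_hasDerivAt t (hc t)
  have hg' : ∀ t, HasDerivAt (fun t => fderiv ℝ f (c t) v)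
      (fderiv ℝ (fderiv ℝ f) (c t) v v) t := fun t => by
    simpa using ((hdf' (c t)).hasFDerivAt.comp_hasDerivAt t (hc t)).clm_apply
      (hasDerivAt_const t v)
  have hK : ∀ t ∈ Icc (0 : ℝ) 1, lam * ‖v‖ ^ 2 ≤ fderiv ℝ (fderiv ℝ f) (c t) v v :=
      fun t ht => by
    simpa [iteratedFDeriv_two_apply] using hhess (c t) (lineMap_mem_segment ℝ x₀ x ht) v
  have := half_mul_le_sub_of_le_deriv₂ hg hg' (by simp [c, hcrit]) hK
  simp only [c, AffineMap.lineMap_apply_one, AffineMap.lineMap_apply_zero] at this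
  linarith

theorem erm_denoised_parameter_consistency_general (d p n : ℕ) (Y : Type)
    (F : EuclideanSpace ℝ (Fin d) → Y → EuclideanSpace ℝ (Fin p) → ℝ)
    (L Δ ε γ δ lamf : ℝ) (hL : 0 < L)
    (hlamf : 0 < lamf)
    (hLip : ∀ (x z : EuclideanSpace ℝ (Fin d)) (y : Y) (θ : EuclideanSpace ℝ (Fin p)),
      ‖z - x‖ ≤ Δ → |F z y θ - F x y θ| ≤ L * ‖z - x‖)
    (X Xh : Fin n → EuclideanSpace ℝ (Fin d)) (y : Fin n → Y)
    (hε0 : 0 ≤ ε) (hεΔ : ε ≤ Δ) (hXh : ∀ i, ‖Xh i - X i‖ ≤ ε)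
    (f fh : EuclideanSpace ℝ (Fin p) → ℝ)
    (hf : ∀ θ, f θ = (1 / n : ℝ) * ∑ i, F (X i) (y i) θ)
    (hfh : ∀ θ, fh θ = (1 / n : ℝ) * ∑ i, F (Xh i) (y i) θ)
    (hsmooth : ContDiff ℝ 2 f)
    (θs : EuclideanSpace ℝ (Fin p))
    (hmin : ∀ θ, f θs ≤ f θ)
    (hgrow : ∀ θ, δ ≤ ‖θ - θs‖ → γ ≤ f θ - f θs)
    (hhess : ∀ θ, ‖θ - θs‖ ≤ δ →
      ∀ w : EuclideanSpace ℝ (Fin p),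
        lamf * ‖w‖ ^ 2 ≤ (iteratedFDeriv ℝ 2 f θ) ![w, w])
    (hcond : 2 * L * ε < γ)
    (θh : EuclideanSpace ℝ (Fin p)) (hminh : ∀ θ, fh θh ≤ fh θ) :
    ‖θh - θs‖ ^ 2 ≤ 4 * L * ε / lamf := by
  have hclose : ∀ θ, |fh θ - f θ| ≤ L * ε := fun θ => by
    simpa [hf, hfh] using abs_average_sub_average_le (mul_nonneg hL.le hε0) fun i =>
      (hLip (X i) (Xh i) (y i) θ ((hXh i).trans hεΔ)).trans
        (mul_le_mul_of_nonneg_left (hXh i) hL.le)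
  have hgap : f θh - f θs ≤ 2 * (L * ε) :=
    sub_le_two_mul_of_abs_sub_le_of_forall_le hclose hminh θs
  have hball : ‖θh - θs‖ ≤ δ := by
    by_contra hout
    have := hgrow θh (not_le.mp hout).le
    linarith
  have hsegment : segment ℝ θs θh ⊆ Metric.closedBall θs δ :=
    (convex_closedBall θs δ).segment_subset
      (Metric.mem_closedBall_self ((norm_nonneg _).trans hball)) (mem_closedBall_iff_norm.mpr hball)
  have hquad : lamf / 2 * ‖θh - θs‖ ^ 2 ≤ f θh - f θs :=
    half_mul_norm_sq_le_sub_of_hessian_ge hsmooth (IsLocalMin.fderiv_eq_zero (.of_forall hmin))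
      fun z hz => hhess z (mem_closedBall_iff_norm.mp (hsegment hz))
  rw [le_div_iff₀ hlamf]
  linarith

/-- Proposition (ERM with denoised data: parameter consistency).  Under the Lipschitz
condition on the loss, if the clean empirical risk `f` is twice continuously
differentiable with unique global minimizer `θ*`, `f(θ) − f(θ*) ≥ γ` for `‖θ − θ*‖ ≥ δ`,
`∇²f(θ) ⪰ λ_f I` for `‖θ − θ*‖ ≤ δ`, `2Lε < γ`, and `θ̂*` globally minimizes the denoised
empirical risk `f̂`, then `‖θ̂* − θ*‖² ≤ 4Lε/λ_f`. -/
theorem erm_denoised_parameter_consistency (d p n : ℕ) (Y : Type)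
    (F : EuclideanSpace ℝ (Fin d) → Y → EuclideanSpace ℝ (Fin p) → ℝ)
    (L Δ ε γ δ lamf : ℝ) (hL : 0 < L) (hΔ : 0 < Δ)
    (hγ : 0 < γ) (hδ : 0 < δ) (hlamf : 0 < lamf)
    (hLip : ∀ (x z : EuclideanSpace ℝ (Fin d)) (y : Y) (θ : EuclideanSpace ℝ (Fin p)),
      ‖z - x‖ ≤ Δ → |F z y θ - F x y θ| ≤ L * ‖z - x‖)
    (X Xh : Fin n → EuclideanSpace ℝ (Fin d)) (y : Fin n → Y)
    (hε0 : 0 ≤ ε) (hεΔ : ε ≤ Δ) (hXh : ∀ i, ‖Xh i - X i‖ ≤ ε)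
    (f fh : EuclideanSpace ℝ (Fin p) → ℝ)
    (hf : ∀ θ, f θ = (1 / n : ℝ) * ∑ i, F (X i) (y i) θ)
    (hfh : ∀ θ, fh θ = (1 / n : ℝ) * ∑ i, F (Xh i) (y i) θ)
    (hsmooth : ContDiff ℝ 2 f)
    (θs : EuclideanSpace ℝ (Fin p))
    (hmin : ∀ θ, f θs ≤ f θ)
    (huniq : ∀ θ, f θ = f θs → θ = θs)
    (hgrow : ∀ θ, δ ≤ ‖θ - θs‖ → γ ≤ f θ - f θs)
    (hhess : ∀ θ, ‖θ - θs‖ ≤ δ →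
      ∀ w : EuclideanSpace ℝ (Fin p),
        lamf * ‖w‖ ^ 2 ≤ (iteratedFDeriv ℝ 2 f θ) ![w, w])
    (hcond : 2 * L * ε < γ)
    (θh : EuclideanSpace ℝ (Fin p)) (hminh : ∀ θ, fh θh ≤ fh θ) :
    ‖θh - θs‖ ^ 2 ≤ 4 * L * ε / lamf :=
  erm_denoised_parameter_consistency_general d p n Y F L Δ ε γ δ lamf hL hlamf hLip X Xh y hε0 hεΔ
    hXh f fh hf hfh hsmooth θs hmin hgrow hhess hcond θh hminh
end

section
/- (Leave-one-out block identity.) Let Z ∈ ℝ^{n×d} have first row z₁ᵀ (z₁ ∈ ℝ^d) and remaining rows forming Z̃ ∈ ℝ^{(n−1)×d}, so that ZᵀZ = Z̃ᵀZ̃ + z₁z₁ᵀ. Let Ṽ = [Ṽᵣ, Ṽ_⊥] ∈ ℝ^{d×d} be an orthogonal matrix with Ṽᵣ ∈ ℝ^{d×r}, such that Z̃ᵀZ̃ = Ṽ diag(Λ̃ᵣ², Λ̃_⊥²) Ṽᵀ where Λ̃ᵣ² ∈ ℝ^{r×r} and Λ̃_⊥² ∈ ℝ^{(d−r)×(d−r)}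 are diagonal. Suppose v̂ ∈ ℝ^d satisfies ZᵀZ v̂ = λ̂² v̂ for some λ̂ ∈ ℝ. Set y = Ṽᵣᵀ v̂, y_⊥ = Ṽ_⊥ᵀ v̂, a = Ṽᵣᵀ z₁ and b = Ṽ_⊥ᵀ z₁. If the matrix λ̂²·I − Λ̃_⊥² − bbᵀ is invertible, then y_⊥ = (λ̂²·I − Λ̃_⊥² − bbᵀ)^{−1} · b · (aᵀy). -/
/-!
Deleting the first row splits `ZᵀZ = Z̃ᵀZ̃ + z₁z₁ᵀ`. Apply `Ṽ_⊥ᵀ` to the eigen-equation: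
orthonormality turns `Ṽ_⊥ᵀZ̃ᵀZ̃` into `Λ̃_⊥²Ṽ_⊥ᵀ`, and the rank-one term contributes `(z₁ᵀv̂) b`,
where `z₁ᵀv̂ = aᵀy + bᵀy_⊥` because `ṼᵣṼᵣᵀ + Ṽ_⊥Ṽ_⊥ᵀ = I`. Moving `b bᵀy_⊥` to the left gives
`(λ̂²I − Λ̃_⊥² − bbᵀ) y_⊥ = (aᵀy) b`.
-/

open Matrix

namespace Matrix

variable {n k l : Type*}

theorem transpose_mul_self_eq_submatrix_succ_add_vecMulVec {α : Type*}
    [NonUnitalNonAssocSemiring α] {p : ℕ} (Z : Matrix (Fin (p + 1)) n α) :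
    Zᵀ * Z = (Z.submatrix Fin.succ id)ᵀ * Z.submatrix Fin.succ id + vecMulVec (Z 0) (Z 0) := by
  ext i j
  simp only [mul_apply, add_apply, vecMulVec_apply, transpose_apply, submatrix_apply, id,
    Fin.sum_univ_succ]
  exact add_comm _ _

variable {R : Type*} [CommRing R] [Fintype n] [Fintype k] [Fintype l]

theorem dotProduct_eq_add_of_mul_transpose_add_eq_one [DecidableEq n] {A : Matrix n k R}
    {B : Matrix n l R} (hAB : A * Aᵀ + B * Bᵀ = 1) (u v : n → R) :
    u ⬝ᵥ v = (Aᵀ *ᵥ u) ⬝ᵥ (Aᵀ *ᵥ v) + (Bᵀ *ᵥ u) ⬝ᵥ (Bᵀ *ᵥ v) := by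
  conv_lhs => rw [← one_mulVec v, ← hAB]
  simp only [add_mulVec, dotProduct_add, ← mulVec_mulVec, dotProduct_mulVec, mulVec_transpose]

theorem transpose_mul_add_eq_of_orthonormal [DecidableEq l] {A : Matrix n k R}
    {B : Matrix n l R} (hB : Bᵀ * B = 1) (hAB : Aᵀ * B = 0) (D₁ : Matrix k k R)
    (D₂ : Matrix l l R) :
    Bᵀ * (A * D₁ * Aᵀ + B * D₂ * Bᵀ) = D₂ * Bᵀ := by
  have hBA : Bᵀ * A = 0 := by simpa using congrArg transpose hAB
  simp only [Matrix.mul_add, ← Matrix.mul_assoc, hBA, hB, Matrix.zero_mul, Matrix.one_mul,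
    zero_add]

theorem eq_smul_inv_mulVec_of_smul_eq [DecidableEq l] {D : Matrix l l R} {b x : l → R}
    {μ c : R} (hinv : IsUnit (μ • (1 : Matrix l l R) - D - vecMulVec b b).det)
    (h : μ • x = D *ᵥ x + (c + b ⬝ᵥ x) • b) :
    x = c • ((μ • (1 : Matrix l l R) - D - vecMulVec b b)⁻¹ *ᵥ b) := by
  set M := μ • (1 : Matrix l l R) - D - vecMulVec b b
  have hMx : M *ᵥ x = c • b := by
    simp only [M, sub_mulVec, smul_mulVec, one_mulVec, vecMulVec_mulVec, op_smul_eq_smul, h,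
      add_smul]
    abel
  rw [← mulVec_smul, ← hMx, mulVec_mulVec, nonsing_inv_mul M hinv, one_mulVec]

end Matrix

theorem leave_one_out_block_identity_general (m d r : ℕ)
    (Z : Matrix (Fin (m + 1)) (Fin d) ℝ)
    (z₁ : Fin d → ℝ) (hz₁ : ∀ j, z₁ j = Z 0 j)
    (Zt : Matrix (Fin m) (Fin d) ℝ) (hZt : ∀ i j, Zt i j = Z i.succ j)
    (Vr : Matrix (Fin d) (Fin r) ℝ) (Vp : Matrix (Fin d) (Fin (d - r)) ℝ)
    (lamr : Fin r → ℝ) (lamp : Fin (d - r) → ℝ)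
    (hVp : Vpᵀ * Vp = 1) (horth : Vrᵀ * Vp = 0)
    (hcomp : Vr * Vrᵀ + Vp * Vpᵀ = 1)
    (hdecomp : Ztᵀ * Zt =
      Vr * Matrix.diagonal lamr * Vrᵀ + Vp * Matrix.diagonal lamp * Vpᵀ)
    (vh : Fin d → ℝ) (lamh : ℝ)
    (heig : (Zᵀ * Z) *ᵥ vh = lamh ^ 2 • vh)
    (hinv : IsUnit (lamh ^ 2 • (1 : Matrix (Fin (d - r)) (Fin (d - r)) ℝ)
        - Matrix.diagonal lamp - vecMulVec (Vpᵀ *ᵥ z₁) (Vpᵀ *ᵥ z₁)).det) :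
    Vpᵀ *ᵥ vh = ((Vrᵀ *ᵥ z₁) ⬝ᵥ (Vrᵀ *ᵥ vh)) •
      ((lamh ^ 2 • (1 : Matrix (Fin (d - r)) (Fin (d - r)) ℝ)
          - Matrix.diagonal lamp - vecMulVec (Vpᵀ *ᵥ z₁) (Vpᵀ *ᵥ z₁))⁻¹
        *ᵥ (Vpᵀ *ᵥ z₁)) := by
  have hZZ : Zᵀ * Z = Ztᵀ * Zt + vecMulVec z₁ z₁ := by
    obtain rfl : z₁ = Z 0 := funext hz₁
    obtain rfl : Zt = Z.submatrix Fin.succ id := Matrix.ext hZt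
    exact transpose_mul_self_eq_submatrix_succ_add_vecMulVec Z
  have hproj : Vpᵀ * (Ztᵀ * Zt) = diagonal lamp * Vpᵀ := by
    rw [hdecomp, transpose_mul_add_eq_of_orthonormal hVp horth]
  have hprojEig : lamh ^ 2 • (Vpᵀ *ᵥ vh) =
      diagonal lamp *ᵥ (Vpᵀ *ᵥ vh) + (z₁ ⬝ᵥ vh) • (Vpᵀ *ᵥ z₁) := by
    rw [← mulVec_smul, ← heig, mulVec_mulVec, hZZ, Matrix.mul_add, hproj, mul_vecMulVec,
      add_mulVec, ← mulVec_mulVec, vecMulVec_mulVec, op_smul_eq_smul]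
  rw [dotProduct_eq_add_of_mul_transpose_add_eq_one hcomp] at hprojEig
  exact eq_smul_inv_mulVec_of_smul_eq hinv hprojEig

/-- Lemma (leave-one-out block identity).  Let `Z ∈ ℝ^{(m+1)×d}` have first row `z₁` and
remaining rows `Z̃`, let `Ṽ = [Ṽᵣ, Ṽ_⊥]` be orthogonal with
`Z̃ᵀZ̃ = Ṽᵣ Λ̃ᵣ² Ṽᵣᵀ + Ṽ_⊥ Λ̃_⊥² Ṽ_⊥ᵀ`, and let `ZᵀZ v̂ = λ̂² v̂`.  With `y = Ṽᵣᵀ v̂`,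
`y_⊥ = Ṽ_⊥ᵀ v̂`, `a = Ṽᵣᵀ z₁`, `b = Ṽ_⊥ᵀ z₁`, if `λ̂² I − Λ̃_⊥² − bbᵀ` is invertible then
`y_⊥ = (λ̂² I − Λ̃_⊥² − bbᵀ)⁻¹ b (aᵀ y)`. -/
theorem leave_one_out_block_identity (m d r : ℕ)
    (Z : Matrix (Fin (m + 1)) (Fin d) ℝ)
    (z₁ : Fin d → ℝ) (hz₁ : ∀ j, z₁ j = Z 0 j)
    (Zt : Matrix (Fin m) (Fin d) ℝ) (hZt : ∀ i j, Zt i j = Z i.succ j)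
    (Vr : Matrix (Fin d) (Fin r) ℝ) (Vp : Matrix (Fin d) (Fin (d - r)) ℝ)
    (lamr : Fin r → ℝ) (lamp : Fin (d - r) → ℝ)
    (hVr : Vrᵀ * Vr = 1) (hVp : Vpᵀ * Vp = 1) (horth : Vrᵀ * Vp = 0)
    (hcomp : Vr * Vrᵀ + Vp * Vpᵀ = 1)
    (hdecomp : Ztᵀ * Zt =
      Vr * Matrix.diagonal lamr * Vrᵀ + Vp * Matrix.diagonal lamp * Vpᵀ)
    (vh : Fin d → ℝ) (lamh : ℝ)
    (heig : (Zᵀ * Z) *ᵥ vh = lamh ^ 2 • vh)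
    (hinv : IsUnit (lamh ^ 2 • (1 : Matrix (Fin (d - r)) (Fin (d - r)) ℝ)
        - Matrix.diagonal lamp - vecMulVec (Vpᵀ *ᵥ z₁) (Vpᵀ *ᵥ z₁)).det) :
    Vpᵀ *ᵥ vh = ((Vrᵀ *ᵥ z₁) ⬝ᵥ (Vrᵀ *ᵥ vh)) •
      ((lamh ^ 2 • (1 : Matrix (Fin (d - r)) (Fin (d - r)) ℝ)
          - Matrix.diagonal lamp - vecMulVec (Vpᵀ *ᵥ z₁) (Vpᵀ *ᵥ z₁))⁻¹
        *ᵥ (Vpᵀ *ᵥ z₁)) :=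
  leave_one_out_block_identity_general m d r Z z₁ hz₁ Zt hZt Vr Vp lamr lamp hVp horth hcomp hdecomp
    vh lamh heig hinv
end
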